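/- arXiv:2103.06350 — 2 statements merged into one kernel-verified Lean document; each statement's English description precedes it below -/
import Mathlib

section
/- Let H be a graph on k ≥ 2 vertices and let L be a real number such that I(H,n) ≥ L·C(n,k) for all n ≥ k. Then for every ε > 0 there exists n₀ such that for all n ≥ n₀, every graph G on n vertices with I(H,G) = I(H,n), and every vertex v of G, the number of k-element vertex subsets S of G with v ∈ S and G[S] isomorphic to H is at least (L − ε)·C(n, k−1). -/
/-!
Write `d(v)` for the number of induced copies of `H` through the vertex `v`, so that
`∑ v, d(v) = k · I(H,G)`. In an extremal graph `G` on `n` vertices some vertex `u` has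
`d(u) ≥ k · I(H,n) / n ≥ L · C(n-1,k-1)`. Replacing any other vertex `v` by a clone of `u`
cannot increase the count: it destroys the `d(v)` copies through `v` and creates one copy for
every copy through `u` avoiding `v`, so `d(v) ≥ d(u) - C(n,k-2)`. As `L ≤ 1` and
`C(n,k-2) = o(C(n,k-1))`, this is at least `(L - ε) · C(n,k-1)` for large `n`.
-/

open SimpleGraph

/-- Number of vertex subsets of `G` whose induced subgraph is isomorphic to `H`. -/
noncomputable def inducedCount {α β : Type*} [Fintype α] [Fintype β]
    (H : SimpleGraph α) (G : SimpleGraph β) : ℕ :=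
  Set.ncard {S : Finset β | Nonempty (H ≃g (G.induce (S : Set β)))}

/-- Maximum of `inducedCount H G` over all graphs `G` on `n` vertices. -/
noncomputable def maxCount {α : Type*} [Fintype α] (H : SimpleGraph α) (n : ℕ) : ℕ :=
  sSup {m | ∃ G : SimpleGraph (Fin n), inducedCount H G = m}

/-- The net graph: a triangle on `{3,4,5}` with pendant vertices `0,1,2`
attached to `3,4,5` respectively (0-indexed version of vertices 1..6). -/
def netGraph : SimpleGraph (Fin 6) :=
  SimpleGraph.fromRel (fun a b =>
    (a = 3 ∧ b = 4) ∨ (a = 4 ∧ b = 5) ∨ (a = 3 ∧ b = 5) ∨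
    (a = 0 ∧ b = 3) ∨ (a = 1 ∧ b = 4) ∨ (a = 2 ∧ b = 5))

/-- `N(n)`: the maximum number of induced copies of the net among graphs on `n` vertices. -/
noncomputable def netMax (n : ℕ) : ℕ := maxCount netGraph n

namespace SimpleGraph

variable {V : Type*} [DecidableEq V] (G : SimpleGraph V) {s t : V}

lemma induce_replaceVertex_of_notMem {S : Set V} (ht : t ∉ S) :
    (G.replaceVertex s t).induce S = G.induce S := by
  ext a b
  exact G.adj_replaceVertex_iff_of_ne s (ne_of_mem_of_not_mem a.2 ht)
    (ne_of_mem_of_not_mem b.2 ht)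

def induceReplaceVertexIso {S : Finset V} (hs : s ∈ S) (ht : t ∉ S) :
    G.induce (S : Set V) ≃g
      (G.replaceVertex s t).induce ((insert t (S.erase s) : Finset V) : Set V) where
  toEquiv := Equiv.subtypeEquiv (Equiv.swap s t) fun x => by
    have hst : s ≠ t := ne_of_mem_of_not_mem hs ht
    rcases eq_or_ne x s with rfl | hxs
    · simp [hs]
    rcases eq_or_ne x t with rfl | hxt
    · simp [ht, hst]
    · simp [Equiv.swap_apply_of_ne_of_ne hxs hxt, hxs, hxt]
  map_rel_iff' {a b} := by
    have ha : (a : V) ≠ t := ne_of_mem_of_not_mem a.2 ht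
    have hb : (b : V) ≠ t := ne_of_mem_of_not_mem b.2 ht
    simp only [comap_adj, Function.Embedding.coe_subtype, Equiv.subtypeEquiv_apply]
    simp only [replaceVertex, Equiv.swap_apply_def]
    split_ifs <;> simp_all [adj_comm]

end SimpleGraph

open Finset Filter

section InducedCopies

variable {α β : Type*} (H : SimpleGraph α) (G : SimpleGraph β)

noncomputable def inducedCountAt (v : β) : ℕ :=
  Set.ncard {S : Finset β | v ∈ S ∧ Nonempty (H ≃g G.induce (S : Set β))}

variable [Fintype α] {H G}

lemma card_eq_of_nonempty_iso_induce {S : Finset β} (h : Nonempty (H ≃g G.induce (S : Set β))) :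
    #S = Fintype.card α := by
  obtain ⟨e⟩ := h
  simpa using (Fintype.card_congr e.toEquiv).symm

variable [Fintype β] (H G)

lemma inducedCount_le_choose : inducedCount H G ≤ (Fintype.card β).choose (Fintype.card α) := by
  classical
  calc inducedCount H G
      ≤ (((univ : Finset β).powersetCard (Fintype.card α) : Finset (Finset β)) :
          Set (Finset β)).ncard :=
        Set.ncard_le_ncard (fun S hS => by simpa using card_eq_of_nonempty_iso_induce hS)
    _ = _ := by rw [Set.ncard_coe_finset, card_powersetCard, card_univ]

lemma inducedCount_le_maxCount {n : ℕ} (G : SimpleGraph (Fin n)) :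
    inducedCount H G ≤ maxCount H n :=
  le_csSup ⟨_, by rintro _ ⟨G', rfl⟩; simpa using inducedCount_le_choose H G'⟩ ⟨G, rfl⟩

lemma maxCount_le_choose (n : ℕ) : maxCount H n ≤ n.choose (Fintype.card α) :=
  csSup_le ⟨_, ⊥, rfl⟩ (by rintro _ ⟨G, rfl⟩; simpa using inducedCount_le_choose H G)

lemma sum_inducedCountAt : ∑ v, inducedCountAt H G v = Fintype.card α * inducedCount H G := by
  classical
  set copies : Finset (Finset β) := {S | Nonempty (H ≃g G.induce (S : Set β))}
  have hat : ∀ v, inducedCountAt H G v = #(copies.bipartiteAbove (· ∈ ·) v) := by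
    intro v
    simp [inducedCountAt, Set.ncard_eq_toFinset_card', bipartiteAbove, copies, filter_filter,
      and_comm]
  have hbelow : ∀ S ∈ copies, #((univ : Finset β).bipartiteBelow (· ∈ ·) S) = Fintype.card α := by
    intro S hS
    simpa [bipartiteBelow, copies] using card_eq_of_nonempty_iso_induce (mem_filter.1 hS).2
  simp_rw [hat, sum_card_bipartiteAbove_eq_sum_card_bipartiteBelow, sum_congr rfl hbelow,
    sum_const, smul_eq_mul, inducedCount, Set.ncard_eq_toFinset_card']
  simp [copies, mul_comm]

end InducedCopies

lemma Set.ncard_setOf_eq_ncard_and_add_ncard_not_and {γ : Type*} [Finite γ] (p q : γ → Prop) :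
    {x | p x}.ncard = {x | q x ∧ p x}.ncard + {x | ¬q x ∧ p x}.ncard := by
  rw [← Set.ncard_inter_add_ncard_sdiff_eq_ncard {x | p x} {x | q x}]
  congr 2 <;> ext <;> simp [and_comm]

lemma ncard_setOf_mem_mem_card_eq_le {β : Type*} [Fintype β] [DecidableEq β] {s t : β}
    (hst : s ≠ t) (k : ℕ) :
    {S : Finset β | t ∈ S ∧ s ∈ S ∧ #S = k}.ncard ≤ (Fintype.card β).choose (k - 2) := by
  have hsub : {S : Finset β | t ∈ S ∧ s ∈ S ∧ #S = k} ⊆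
      (fun T => insert t (insert s T)) '' ((univ : Finset β).powersetCard (k - 2) : Set _) := by
    rintro S ⟨ht, hs, rfl⟩
    have hs' : s ∈ S.erase t := mem_erase.2 ⟨hst, hs⟩
    refine ⟨(S.erase t).erase s, ?_, by simp [insert_erase hs', insert_erase ht]⟩
    simp only [mem_coe, mem_powersetCard, subset_univ, true_and]
    rw [card_erase_of_mem hs', card_erase_of_mem ht]
    omega
  calc _ ≤ _ := Set.ncard_le_ncard hsub
    _ ≤ _ := Set.ncard_image_le
    _ = _ := by rw [Set.ncard_coe_finset, card_powersetCard, card_univ]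

section Extremal

variable {α β : Type*} [Fintype α] [Fintype β] (H : SimpleGraph α) (G : SimpleGraph β)

lemma exists_mul_inducedCount_le_mul_inducedCountAt [Nonempty β] :
    ∃ u, Fintype.card α * inducedCount H G ≤ Fintype.card β * inducedCountAt H G u := by
  obtain ⟨u, -, hu⟩ := exists_le_of_sum_le univ_nonempty
    (f := fun _ => Fintype.card α * inducedCount H G)
    (g := fun u => Fintype.card β * inducedCountAt H G u) (by
      rw [← mul_sum univ (inducedCountAt H G), sum_inducedCountAt, sum_const, card_univ,
        smul_eq_mul])
  exact ⟨u, hu⟩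

lemma inducedCount_add_inducedCountAt_le [DecidableEq β] (s t : β) :
    inducedCount H G + inducedCountAt H G s ≤
      inducedCount H (G.replaceVertex s t) + inducedCountAt H G t +
        (Fintype.card β).choose (Fintype.card α - 2) := by
  rcases eq_or_ne s t with rfl | hst
  · simp
  have hout : {S : Finset β | t ∉ S ∧ Nonempty (H ≃g (G.replaceVertex s t).induce (S : Set β))} =
      {S : Finset β | t ∉ S ∧ Nonempty (H ≃g G.induce (S : Set β))} := by
    ext S
    simp +contextual [G.induce_replaceVertex_of_notMem]
  have hmove : {S : Finset β | t ∉ S ∧ s ∈ S ∧ Nonempty (H ≃g G.induce (S : Set β))}.ncard ≤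
      inducedCountAt H (G.replaceVertex s t) t := by
    refine Set.ncard_le_ncard_of_injOn (fun S => insert t (S.erase s)) ?_ ?_
    · rintro S ⟨ht, hs, ⟨e⟩⟩
      exact ⟨mem_insert_self t _, ⟨e.trans (G.induceReplaceVertexIso hs ht)⟩⟩
    · rintro S₁ ⟨ht₁, hs₁, -⟩ S₂ ⟨ht₂, hs₂, -⟩ h
      have key : ∀ S : Finset β, t ∉ S → s ∈ S → insert s ((insert t (S.erase s)).erase t) = S :=
        fun S ht hs => by
          rw [erase_insert fun h => ht (mem_of_mem_erase h), insert_erase hs]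
      rw [← key S₁ ht₁ hs₁, ← key S₂ ht₂ hs₂]
      exact congrArg (fun T => insert s (T.erase t)) h
  have hpair : {S : Finset β | t ∈ S ∧ s ∈ S ∧ Nonempty (H ≃g G.induce (S : Set β))}.ncard ≤
      (Fintype.card β).choose (Fintype.card α - 2) := by
    refine (Set.ncard_le_ncard ?_).trans (ncard_setOf_mem_mem_card_eq_le hst (Fintype.card α))
    rintro S ⟨ht, hs, hS⟩
    exact ⟨ht, hs, card_eq_of_nonempty_iso_induce hS⟩
  have hG := Set.ncard_setOf_eq_ncard_and_add_ncard_not_and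
    (fun S : Finset β => Nonempty (H ≃g G.induce (S : Set β))) (t ∈ ·)
  have hG' := Set.ncard_setOf_eq_ncard_and_add_ncard_not_and
    (fun S : Finset β => Nonempty (H ≃g (G.replaceVertex s t).induce (S : Set β))) (t ∈ ·)
  have hs := Set.ncard_setOf_eq_ncard_and_add_ncard_not_and
    (fun S : Finset β => s ∈ S ∧ Nonempty (H ≃g G.induce (S : Set β))) (t ∈ ·)
  simp only [hout] at hG'
  simp only [inducedCount, inducedCountAt] at *
  omega

lemma inducedCountAt_le_of_extremal {n : ℕ} {G : SimpleGraph (Fin n)}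
    (hG : inducedCount H G = maxCount H n) (s t : Fin n) :
    inducedCountAt H G s ≤ inducedCountAt H G t + n.choose (Fintype.card α - 2) := by
  have := inducedCount_add_inducedCountAt_le H G s t
  have := inducedCount_le_maxCount H (G.replaceVertex s t)
  simp only [Fintype.card_fin] at *
  omega

lemma exists_mul_choose_le_inducedCountAt {k n : ℕ} (H : SimpleGraph (Fin (k + 1)))
    (G : SimpleGraph (Fin (n + 1))) {L : ℝ}
    (hG : L * (n + 1).choose (k + 1) ≤ inducedCount H G) :
    ∃ u, L * n.choose k ≤ inducedCountAt H G u := by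
  obtain ⟨u, hu⟩ := exists_mul_inducedCount_le_mul_inducedCountAt H G
  simp only [Fintype.card_fin] at hu
  have hid : ((n + 1 : ℕ) : ℝ) * n.choose k = (n + 1).choose (k + 1) * (k + 1 : ℕ) := by
    exact_mod_cast Nat.add_one_mul_choose_eq n k
  have hu' : ((k + 1 : ℕ) : ℝ) * inducedCount H G ≤ (n + 1 : ℕ) * inducedCountAt H G u := by
    exact_mod_cast hu
  refine ⟨u, le_of_mul_le_mul_left ?_ (by positivity : (0 : ℝ) < (n + 1 : ℕ))⟩
  calc ((n + 1 : ℕ) : ℝ) * (L * n.choose k)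
      = (k + 1 : ℕ) * (L * (n + 1).choose (k + 1)) := by rw [mul_left_comm, hid]; ring
    _ ≤ (k + 1 : ℕ) * inducedCount H G := by gcongr
    _ ≤ _ := hu'

end Extremal

lemma eventually_choose_le_mul_choose_succ (j : ℕ) {c : ℝ} (hc : 0 < c) :
    ∀ᶠ n : ℕ in atTop, (n.choose j : ℝ) ≤ c * n.choose (j + 1) := by
  filter_upwards [eventually_ge_atTop (j + ⌈(j + 1 : ℝ) / c⌉₊)] with n hn
  have hjn : j ≤ n := by omega
  have hratio : (n.choose (j + 1) : ℝ) * (j + 1) = n.choose j * (n - j) := by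
    have := Nat.choose_succ_right_eq n j
    rw [← Nat.cast_sub hjn]
    exact_mod_cast this
  have hgap : (j + 1 : ℝ) ≤ c * (n - j) := by
    have hceil : (j + 1 : ℝ) / c ≤ n - j := by
      refine (Nat.le_ceil _).trans ?_
      rw [le_sub_iff_add_le']
      exact_mod_cast hn
    rwa [div_le_iff₀ hc, mul_comm] at hceil
  refine le_of_mul_le_mul_right ?_ (by positivity : (0 : ℝ) < j + 1)
  calc (n.choose j : ℝ) * (j + 1) ≤ n.choose j * (c * (n - j)) := by gcongr
    _ = c * n.choose (j + 1) * (j + 1) := by rw [mul_assoc, hratio]; ring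

theorem extremal_vertex_count_lower_bound
    (k : ℕ) (hk : 2 ≤ k) (H : SimpleGraph (Fin k)) (L : ℝ)
    (hL : ∀ n : ℕ, k ≤ n → L * (n.choose k : ℝ) ≤ (maxCount H n : ℝ)) :
    ∀ ε : ℝ, 0 < ε → ∃ n₀ : ℕ, ∀ n : ℕ, n₀ ≤ n → ∀ G : SimpleGraph (Fin n),
      inducedCount H G = maxCount H n → ∀ v : Fin n,
        (L - ε) * (n.choose (k - 1) : ℝ) ≤
          (Set.ncard {S : Finset (Fin n) |
            v ∈ S ∧ Nonempty (H ≃g (G.induce (S : Set (Fin n))))} : ℝ) := by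
  intro ε hε
  obtain ⟨j, rfl⟩ : ∃ j, k = j + 2 := ⟨k - 2, by omega⟩
  have hL1 : L ≤ 1 := by
    simpa using (hL _ le_rfl).trans (Nat.cast_le.2 (maxCount_le_choose H (j + 2)))
  obtain ⟨n₀, hn₀⟩ := eventually_atTop.1 ((eventually_ge_atTop (j + 2)).and
    (eventually_choose_le_mul_choose_succ j (half_pos hε)))
  refine ⟨n₀, fun n hn G hG v => ?_⟩
  obtain ⟨hkn, hsmall⟩ := hn₀ n hn
  obtain ⟨N, rfl⟩ : ∃ N, n = N + 1 := ⟨n - 1, by omega⟩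
  change (L - ε) * ((N + 1).choose (j + 1) : ℝ) ≤ inducedCountAt H G v
  obtain ⟨u, hu⟩ := exists_mul_choose_le_inducedCountAt H G (by rw [hG]; exact hL _ hkn)
  have hv : (inducedCountAt H G u : ℝ) ≤ inducedCountAt H G v + (N + 1).choose j := by
    have := inducedCountAt_le_of_extremal H hG u v
    simp only [Fintype.card_fin, Nat.add_sub_cancel] at this
    exact_mod_cast this
  have hpascal : ((N + 1).choose (j + 1) : ℝ) = N.choose j + N.choose (j + 1) := by
    exact_mod_cast Nat.choose_succ_succ N j
  have hmono : (N.choose j : ℝ) ≤ (N + 1).choose j := by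
    exact_mod_cast Nat.choose_le_choose j N.le_succ
  have hL_choose : L * N.choose j ≤ N.choose j := mul_le_of_le_one_left (by positivity) hL1
  rw [hpascal] at hsmall ⊢
  linarith
end

section
/- Let G be a blow-up of the net with parts X₁,…,X₆. Then every induced copy of the net in G either has exactly one vertex in each of the six parts or has all six of its vertices inside a single part, and consequently I(Net, G) = |X₁|·|X₂|·|X₃|·|X₄|·|X₅|·|X₆| + ∑_{i=1}^{6} I(Net, G[X_i]), where G[X_i] is the subgraph of G induced on X_i. -/
open SimpleGraph

/-- `G` is a blow-up of the net along the labeling `φ`: vertices with distinct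
labels are adjacent iff their labels are adjacent in the net. -/
def IsNetBlowup {V : Type*} (G : SimpleGraph V) (φ : V → Fin 6) : Prop :=
  ∀ u v : V, φ u ≠ φ v → (G.Adj u v ↔ netGraph.Adj (φ u) (φ v))

/-!
Fix an induced copy `e : B ≃g G[S]` of `B` in a blow-up `G` of `B` with parts `X_i = φ⁻¹(i)`.
Since adjacency between different parts of a blow-up only depends on the parts, every fibre of
`φ ∘ e` is a module of `B`. The net is prime, so each fibre has at most one vertex or is
everything: `S` is a transversal of the parts or lies inside a single part. Transversals are the
images of sections of `φ`, all of which induce `B`, and they contribute `∏ |X_i|`; copies inside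
`X_i` are the copies in `G[X_i]`.
-/

open Finset

section

variable {U V W : Type*}

theorem Finset.card_filter_eq_one_of_injOn [Fintype U] [DecidableEq U] {S : Finset V}
    {φ : V → U} (hinj : Set.InjOn φ S) (hcard : #S = Fintype.card U) (i : U) :
    #{v ∈ S | φ v = i} = 1 := by
  classical
  have himage : S.image φ = univ := eq_univ_of_card _ ((card_image_of_injOn hinj).trans hcard)
  obtain ⟨v, hv, rfl⟩ := mem_image.1 (himage ▸ mem_univ i)
  refine card_eq_one.2 ⟨v, eq_singleton_iff_unique_mem.2 ⟨mem_filter.2 ⟨hv, rfl⟩, ?_⟩⟩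
  exact fun w hw => hinj (mem_filter.1 hw).1 hv (mem_filter.1 hw).2

section Transversal

variable [Fintype U] [DecidableEq U] [DecidableEq V] {φ : V → U}

theorem Finset.filter_image_eq_singleton_of_leftInverse {t : U → V}
    (ht : Function.LeftInverse φ t) (i : U) : {v ∈ univ.image t | φ v = i} = {t i} := by
  ext v
  simp only [mem_filter, mem_image, mem_univ, true_and, mem_singleton]
  constructor
  · rintro ⟨⟨j, rfl⟩, rfl⟩
    rw [ht]
  · rintro rfl
    exact ⟨⟨i, rfl⟩, ht i⟩

theorem Finset.exists_leftInverse_image_eq {S : Finset V}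
    (hS : ∀ i, #{v ∈ S | φ v = i} = 1) :
    ∃ t : U → V, Function.LeftInverse φ t ∧ univ.image t = S := by
  choose t ht using fun i => card_eq_one.1 (hS i)
  have hmem : ∀ {v i}, v ∈ S ∧ φ v = i ↔ v = t i := fun {v i} => by
    rw [← mem_singleton (b := v), ← ht i, mem_filter]
  refine ⟨t, fun i => (hmem.2 rfl).2, ?_⟩
  ext v
  simp only [mem_image, mem_univ, true_and]
  exact ⟨fun ⟨i, hi⟩ => (hmem.2 hi.symm).1, fun hv => ⟨φ v, (hmem.1 ⟨hv, rfl⟩).symm⟩⟩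

theorem Finset.card_transversals [Fintype V] (φ : V → U) :
    #{S : Finset V | ∀ i, #{v ∈ S | φ v = i} = 1} = ∏ i, #{v | φ v = i} := by
  have hsections : ∀ t : U → V, t ∈ Fintype.piFinset (fun i => {v | φ v = i}) ↔
      Function.LeftInverse φ t := by
    simp [Fintype.mem_piFinset, Function.LeftInverse]
  have himage : ({S | ∀ i, #{v ∈ S | φ v = i} = 1} : Finset (Finset V)) =
      (Fintype.piFinset fun i => {v | φ v = i}).image fun t => univ.image t := by
    ext S
    simp only [mem_filter, mem_univ, true_and, mem_image, hsections]
    constructor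
    · exact exists_leftInverse_image_eq
    · rintro ⟨t, ht, rfl⟩ i
      rw [filter_image_eq_singleton_of_leftInverse ht, card_singleton]
  rw [himage, card_image_of_injOn, Fintype.card_piFinset]
  intro t ht t' ht' htt'
  rw [mem_coe, hsections] at ht ht'
  funext i
  apply singleton_injective
  rw [← filter_image_eq_singleton_of_leftInverse ht, ← filter_image_eq_singleton_of_leftInverse ht',
    show univ.image t = univ.image t' from htt']

end Transversal

namespace SimpleGraph

def IsModule (H : SimpleGraph W) (T : Finset W) : Prop :=
  ∀ a ∈ T, ∀ b ∈ T, ∀ c ∉ T, (H.Adj c a ↔ H.Adj c b)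

def IsPrime [Fintype W] (H : SimpleGraph W) : Prop :=
  ∀ T : Finset W, H.IsModule T → #T ≤ 1 ∨ T = univ

def IsBlowup (G : SimpleGraph V) (B : SimpleGraph U) (φ : V → U) : Prop :=
  ∀ u v, φ u ≠ φ v → (G.Adj u v ↔ B.Adj (φ u) (φ v))

theorem IsPrime.injective_or_exists_const [Fintype W] [DecidableEq U] {F : SimpleGraph W}
    (hF : F.IsPrime) (f : W → U) (hf : ∀ i, F.IsModule {a | f a = i}) :
    Function.Injective f ∨ ∃ i, ∀ a, f a = i := by
  by_cases hconst : ∃ i, ({a | f a = i} : Finset W) = univ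
  · obtain ⟨i, hi⟩ := hconst
    exact Or.inr ⟨i, fun a => by simpa using eq_univ_iff_forall.1 hi a⟩
  · simp only [not_exists] at hconst
    refine Or.inl fun a b hab =>
      card_le_one.1 ((hF _ (hf (f a))).resolve_right (hconst _)) a ?_ b ?_
    · simp
    · simp [hab]

theorem card_eq_of_iso_induce [Fintype W] {F : SimpleGraph W} {G : SimpleGraph V}
    {S : Finset V} (e : F ≃g G.induce (S : Set V)) : #S = Fintype.card W := by
  classical
  simpa using (Fintype.card_congr e.toEquiv).symm

theorem nonempty_iso_induce_induce_iff {H : SimpleGraph W} {G : SimpleGraph V} (X : Set V)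
    (T : Finset X) :
    Nonempty (H ≃g (G.induce X).induce (T : Set X)) ↔
      Nonempty (H ≃g G.induce (T.map (Function.Embedding.subtype _) : Set V)) := by
  have e := ((Embedding.induce (G := G) X).comp (Embedding.induce (T : Set X))).isoInduceRange
  have hrange : Set.range ((Embedding.induce (G := G) X).comp (Embedding.induce (T : Set X))) =
      (T.map (Function.Embedding.subtype _) : Set V) := by
    ext v
    constructor
    · rintro ⟨⟨w, hw⟩, rfl⟩
      exact mem_coe.2 (mem_map_of_mem _ hw)
    · intro hv
      obtain ⟨w, hw, rfl⟩ := mem_map.1 hv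
      exact ⟨⟨w, hw⟩, rfl⟩
  rw [hrange] at e
  exact ⟨fun ⟨f⟩ => ⟨f.trans e⟩, fun ⟨f⟩ => ⟨f.trans e.symm⟩⟩

section InducedCopies

open Classical in
noncomputable def inducedCopies [Fintype V] (H : SimpleGraph W) (G : SimpleGraph V) :
    Finset (Finset V) :=
  {S | Nonempty (H ≃g G.induce (S : Set V))}

variable [Fintype V] {H : SimpleGraph W} {G : SimpleGraph V}

@[simp]
theorem mem_inducedCopies {S : Finset V} :
    S ∈ inducedCopies H G ↔ Nonempty (H ≃g G.induce (S : Set V)) := by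
  simp [inducedCopies]

theorem inducedCount_eq_card_inducedCopies [Fintype W] :
    inducedCount H G = #(inducedCopies H G) := by
  rw [inducedCount, ← Set.ncard_coe_finset]
  congr 1
  ext S
  simp

theorem inducedCount_induce [Fintype W] [DecidableEq V] (H : SimpleGraph W)
    (G : SimpleGraph V) (X : Finset V) :
    inducedCount H (G.induce (X : Set V)) = #{S ∈ inducedCopies H G | S ⊆ X} := by
  have himage : (fun T => T.map (Function.Embedding.subtype _)) ''
      {T : Finset (X : Set V) | Nonempty (H ≃g (G.induce (X : Set V)).induce (T : Set _))} =
      ({S ∈ inducedCopies H G | S ⊆ X} : Finset (Finset V)) := by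
    ext S
    simp only [Set.mem_image, Set.mem_ofPred_eq, nonempty_iso_induce_induce_iff, coe_filter,
      mem_inducedCopies]
    constructor
    · rintro ⟨T, hT, rfl⟩
      refine ⟨hT, fun v hv => ?_⟩
      obtain ⟨w, -, rfl⟩ := mem_map.1 hv
      exact w.2
    · rintro ⟨hS, hSX⟩
      have hmap := subtype_map_of_mem (p := (· ∈ (X : Set V))) hSX
      exact ⟨S.subtype (· ∈ (X : Set V)), by rwa [hmap], hmap⟩
  rw [inducedCount, ← Set.ncard_coe_finset, ← himage,
    Set.ncard_image_of_injective _ (Finset.map_injective _)]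

end InducedCopies

namespace IsBlowup

variable {G : SimpleGraph V} {B : SimpleGraph U} {φ : V → U}

theorem isModule_fiber [Fintype W] [DecidableEq U] {F : SimpleGraph W} {S : Set V}
    (hφ : G.IsBlowup B φ) (e : F ≃g G.induce S) (i : U) :
    F.IsModule {a | φ (e a) = i} := by
  intro a ha b hb c hc
  simp only [mem_filter, mem_univ, true_and] at ha hb hc
  rw [← e.map_adj_iff, ← e.map_adj_iff (v := c), comap_adj, comap_adj,
    Function.Embedding.coe_subtype, hφ _ _ (by rwa [ha]), hφ _ _ (by rwa [hb]), ha, hb]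

theorem injOn_or_exists_const_of_iso [Fintype W] {F : SimpleGraph W} {S : Set V}
    (hF : F.IsPrime) (hφ : G.IsBlowup B φ) (e : F ≃g G.induce S) :
    S.InjOn φ ∨ ∃ i, ∀ v ∈ S, φ v = i := by
  classical
  have hsymm : ∀ v (hv : v ∈ S), φ (e (e.symm ⟨v, hv⟩)) = φ v := by simp
  rcases hF.injective_or_exists_const _ (hφ.isModule_fiber e) with hinj | ⟨i, hi⟩
  · refine Or.inl fun v hv w hw hvw => ?_
    simpa using hinj ((hsymm v hv).trans (hvw.trans (hsymm w hw).symm))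
  · exact Or.inr ⟨i, fun v hv => hsymm v hv ▸ hi _⟩

theorem isTransversal_or_exists_subset_fiber_of_iso [Fintype U] [DecidableEq U]
    {S : Finset V} (hB : B.IsPrime) (hφ : G.IsBlowup B φ) (e : B ≃g G.induce (S : Set V)) :
    (∀ i, #{v ∈ S | φ v = i} = 1) ∨ ∃ i, ∀ v ∈ S, φ v = i :=
  (hφ.injOn_or_exists_const_of_iso hB e).imp_left
    fun hinj => card_filter_eq_one_of_injOn hinj (card_eq_of_iso_induce e)

theorem nonempty_iso_induce_image [Fintype U] [DecidableEq V] (hφ : G.IsBlowup B φ)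
    {t : U → V} (ht : Function.LeftInverse φ t) :
    Nonempty (B ≃g G.induce (univ.image t : Set V)) := by
  let f : B ↪g G :=
    { toFun := t
      inj' := ht.injective
      map_rel_iff' := fun {a b} => by
        by_cases hab : a = b
        · subst hab
          simp
        · simp only [Function.Embedding.coeFn_mk]
          rw [hφ _ _ (by rwa [ht, ht]), ht, ht] }
  rw [coe_image, coe_univ, Set.image_univ]
  exact ⟨f.isoInduceRange⟩

theorem inducedCopies_eq_union [Fintype U] [DecidableEq U] [Fintype V] [DecidableEq V]
    (hB : B.IsPrime) (hφ : G.IsBlowup B φ) :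
    inducedCopies B G = ({S | ∀ i, #{v ∈ S | φ v = i} = 1} : Finset (Finset V)) ∪
      univ.biUnion fun i => {S ∈ inducedCopies B G | S ⊆ ({v | φ v = i} : Finset V)} := by
  ext S
  simp only [mem_union, mem_filter, mem_univ, true_and, mem_biUnion]
  constructor
  · intro hS
    obtain ⟨e⟩ := mem_inducedCopies.1 hS
    refine (hφ.isTransversal_or_exists_subset_fiber_of_iso hB e).imp_right ?_
    rintro ⟨i, hi⟩
    exact ⟨i, hS, fun v hv => mem_filter.2 ⟨mem_univ v, hi v hv⟩⟩
  · rintro (hS | ⟨i, hS, -⟩)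
    · obtain ⟨t, ht, rfl⟩ := exists_leftInverse_image_eq hS
      exact mem_inducedCopies.2 (hφ.nonempty_iso_induce_image ht)
    · exact hS

theorem inducedCount_eq [Fintype U] [DecidableEq U] [Nontrivial U] [Fintype V]
    (hB : B.IsPrime) (hφ : G.IsBlowup B φ) :
    inducedCount B G = ∏ i, #{v | φ v = i} +
      ∑ i, inducedCount B (G.induce (({v | φ v = i} : Finset V) : Set V)) := by
  classical
  have hdisj : Disjoint ({S | ∀ i, #{v ∈ S | φ v = i} = 1} : Finset (Finset V))
      (univ.biUnion fun i => {S ∈ inducedCopies B G | S ⊆ ({v | φ v = i} : Finset V)}) := by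
    simp only [Finset.disjoint_left, mem_filter, mem_univ, true_and, mem_biUnion, not_exists,
      not_and]
    intro S hS i _ hSi
    obtain ⟨j, hji⟩ := exists_ne i
    obtain ⟨v, hv⟩ := card_pos.1 ((hS j).symm ▸ one_pos)
    rw [mem_filter] at hv
    exact hji (hv.2.symm.trans (mem_filter.1 (hSi hv.1)).2)
  have hpair : (Set.univ : Set U).PairwiseDisjoint
      fun i => {S ∈ inducedCopies B G | S ⊆ ({v | φ v = i} : Finset V)} := by
    intro i _ j _ hij
    rw [Function.onFun, Finset.disjoint_left]
    rintro S hSi hSj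
    rw [mem_filter] at hSi hSj
    obtain ⟨e⟩ := mem_inducedCopies.1 hSi.1
    obtain ⟨a⟩ := (inferInstance : Nonempty U)
    have hv : (e a : V) ∈ S := (e a).2
    exact hij ((mem_filter.1 (hSi.2 hv)).2.symm.trans (mem_filter.1 (hSj.2 hv)).2)
  rw [inducedCount_eq_card_inducedCopies, hφ.inducedCopies_eq_union hB,
    card_union_of_disjoint hdisj, card_biUnion (by simpa using hpair), card_transversals]
  simp_rw [inducedCount_induce]

end IsBlowup

end SimpleGraph

end

instance : DecidableRel netGraph.Adj := fun a b =>
  decidable_of_iff' _ (SimpleGraph.fromRel_adj _ a b)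

theorem netGraph_isPrime : netGraph.IsPrime := by
  unfold SimpleGraph.IsPrime SimpleGraph.IsModule
  decide

theorem netBlowup_inducedCount_recurrence
    {V : Type*} [Fintype V] (G : SimpleGraph V) (φ : V → Fin 6)
    (hφ : IsNetBlowup G φ) :
    (∀ S : Finset V, Nonempty (netGraph ≃g (G.induce (S : Set V))) →
      (∀ i : Fin 6, (S.filter (fun v => φ v = i)).card = 1) ∨
      (∃ i : Fin 6, ∀ v ∈ S, φ v = i)) ∧
    inducedCount netGraph G =
      (∏ i : Fin 6, (Finset.univ.filter (fun v => φ v = i)).card) +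
      ∑ i : Fin 6,
        inducedCount netGraph
          (G.induce ((Finset.univ.filter (fun v => φ v = i) : Finset V) : Set V)) := by
  have hblowup : G.IsBlowup netGraph φ := hφ
  exact ⟨fun S ⟨e⟩ => hblowup.isTransversal_or_exists_subset_fiber_of_iso netGraph_isPrime e,
    hblowup.inducedCount_eq netGraph_isPrime⟩
end
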